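/- Let r_1, …, r_n ∈ ℝ_{>0} be multiplicatively independent (they generate a free abelian group of rank n under multiplication), and let p be a prime. Then the subgroup of ℝ_{>0} generated by all p^k-th roots r_i^{1/p^k} (i = 1,…,n, k ≥ 0) is a free ℤ[1/p]-module of rank n. -/

import Mathlib

open Real

/-! Taking logarithms, the group generated by the roots `rᵢ ^ (1/pᵏ)` becomes the subgroup of `ℝ`
generated by the numbers `log rᵢ / pᵏ`, which is the image of `m ↦ ∑ mᵢ log rᵢ` on `ℤ[1/p]ⁿ`.
That map is injective: clearing the denominators of a relation `∑ mᵢ log rᵢ = 0` gives an integer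
relation among the `log rᵢ`, i.e. a multiplicative relation among the `rᵢ`. -/

lemma IsLocalization.Away.exists_eq_algebraMap_mul_invSelf_pow {R S : Type*} [CommSemiring R]
    [CommSemiring S] [Algebra R S] (x : R) [IsLocalization.Away x S] (z : S) :
    ∃ (a : R) (n : ℕ), z = algebraMap R S a * invSelf x ^ n := by
  obtain ⟨n, a, h⟩ := IsLocalization.Away.surj x z
  refine ⟨a, n, ?_⟩
  rw [← h, mul_assoc, ← mul_pow, mul_invSelf, one_pow, mul_one]

lemma closure_ofAdd_single_invSelf_pow_eq_top {ι S : Type*} [Fintype ι] [DecidableEq ι]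
    [CommRing S] [Algebra ℤ S] (x : ℤ) [IsLocalization.Away x S] :
    Subgroup.closure (Set.range fun ik : ι × ℕ ↦
      Multiplicative.ofAdd (Pi.single ik.1 (IsLocalization.Away.invSelf x ^ ik.2) : ι → S)) = ⊤ := by
  refine eq_top_iff.mpr fun m _ ↦ ?_
  rw [← ofAdd_toAdd m, ← Finset.univ_sum_single (Multiplicative.toAdd m), ofAdd_sum]
  refine Subgroup.prod_mem _ fun i _ ↦ ?_
  obtain ⟨a, k, ha⟩ := IsLocalization.Away.exists_eq_algebraMap_mul_invSelf_pow x (m.toAdd i)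
  rw [ha, eq_intCast, ← zsmul_eq_mul, Pi.single_smul', ofAdd_zsmul]
  exact zpow_mem (Subgroup.subset_closure (Set.mem_range_self (i, k))) a

section

variable {ι : Type*} [Fintype ι] {p : ℤ} (hp : p ≠ 0)

noncomputable abbrev awayToReal : Localization.Away p →+* ℝ :=
  Localization.awayLift (Int.castRingHom ℝ) p (by simpa using hp)

lemma awayToReal_algebraMap (a : ℤ) : awayToReal hp (algebraMap ℤ _ a) = a :=
  IsLocalization.Away.lift_eq _ _ a

lemma awayToReal_invSelf : awayToReal hp (IsLocalization.Away.invSelf p) = (p : ℝ)⁻¹ := by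
  have h := congrArg (awayToReal hp)
    (IsLocalization.Away.mul_invSelf (S := Localization.Away p) p)
  rw [map_mul, awayToReal_algebraMap, map_one] at h
  exact eq_inv_of_mul_eq_one_right h

lemma eq_zero_of_sum_awayToReal_mul_eq_zero {v : ι → ℝ}
    (hv : ∀ b : ι → ℤ, ∑ i, b i * v i = 0 → b = 0) {m : ι → Localization.Away p}
    (hm : ∑ i, awayToReal hp (m i) * v i = 0) : m = 0 := by
  obtain ⟨⟨_, K, rfl⟩, hK⟩ :=
    IsLocalization.exist_integer_multiples_of_finite (Submonoid.powers p) m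
  choose b hb using hK
  have hb_real : ∀ i, (b i : ℝ) = p ^ K * awayToReal hp (m i) := fun i ↦ by
    simpa [Algebra.smul_def, awayToReal_algebraMap] using congrArg (awayToReal hp) (hb i)
  have hb0 : b = 0 := hv b (by simp [hb_real, mul_assoc, ← Finset.mul_sum, hm])
  funext i
  have h := hb i
  rw [hb0, Pi.zero_apply, map_zero, Algebra.smul_def] at h
  exact (IsLocalization.map_units _ (⟨p ^ K, K, rfl⟩ : Submonoid.powers p)).mul_right_eq_zero.mp
    h.symm

lemma eq_zero_of_sum_intCast_mul_log_eq_zero {r : ι → ℝ} (hr : ∀ i, 0 < r i)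
    (hindep : ∀ m : ι → ℤ, ∏ i, r i ^ m i = 1 → m = 0) (b : ι → ℤ)
    (hb : ∑ i, b i * log (r i) = 0) : b = 0 := by
  refine hindep b ?_
  calc ∏ i, r i ^ b i = ∏ i, exp (b i * log (r i)) := by
        refine Finset.prod_congr rfl fun i _ ↦ ?_
        rw [← log_zpow, exp_log (zpow_pos (hr i) _)]
    _ = 1 := by rw [← exp_sum, hb, exp_zero]

noncomputable def logCombination (r : ι → ℝ) : (ι → Localization.Away p) →+ ℝ where
  toFun m := ∑ i, awayToReal hp (m i) * log (r i)
  map_zero' := by simp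
  map_add' _ _ := by simp [add_mul, Finset.sum_add_distrib]

/-- `m ↦ ∏ i, r i ^ m i`, built as `exp ∘ logCombination` so that it is a homomorphism. -/
noncomputable def prodRpow (r : ι → ℝ) : Multiplicative (ι → Localization.Away p) →* ℝˣ :=
  (expMonoidHom.comp (logCombination hp r).toMultiplicative).toHomUnits

lemma coe_prodRpow (r : ι → ℝ) (m : Multiplicative (ι → Localization.Away p)) :
    (prodRpow hp r m : ℝ) = exp (∑ i, awayToReal hp (m.toAdd i) * log (r i)) :=
  rfl

lemma coe_prodRpow_ofAdd_single [DecidableEq ι] {r : ι → ℝ} (hr : ∀ i, 0 < r i) (i : ι)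
    (x : Localization.Away p) :
    (prodRpow hp r (.ofAdd (Pi.single i x)) : ℝ) = r i ^ awayToReal hp x := by
  rw [coe_prodRpow, toAdd_ofAdd, Fintype.sum_eq_single i fun j hj ↦ by simp [hj],
    Pi.single_eq_same, rpow_def_of_pos (hr i), mul_comm]

lemma prodRpow_injective {r : ι → ℝ} (hr : ∀ i, 0 < r i)
    (hindep : ∀ m : ι → ℤ, ∏ i, r i ^ m i = 1 → m = 0) :
    Function.Injective (prodRpow hp r) := by
  rw [injective_iff_map_eq_one]
  intro m hm
  have h : ∑ i, awayToReal hp (m.toAdd i) * log (r i) = 0 := by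
    simpa [coe_prodRpow] using congrArg Units.val hm
  exact eq_zero_of_sum_awayToReal_mul_eq_zero hp
    (eq_zero_of_sum_intCast_mul_log_eq_zero hr hindep) h

end

lemma range_prodRpow {ι : Type*} [Fintype ι] {p : ℕ} (hp : (p : ℤ) ≠ 0) {r : ι → ℝ}
    (hr : ∀ i, 0 < r i) :
    (prodRpow hp r).range = Subgroup.closure
      {u : ℝˣ | 0 < (u : ℝ) ∧ ∃ (i : ι) (k : ℕ), (u : ℝ) = r i ^ (((p : ℝ) ^ k)⁻¹ : ℝ)} := by
  classical
  rw [MonoidHom.range_eq_map, ← closure_ofAdd_single_invSelf_pow_eq_top (S := Localization.Away (p : ℤ)) p,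
    MonoidHom.map_closure, ← Set.range_comp]
  have h_gen (i : ι) (k : ℕ) : (prodRpow hp r (.ofAdd (Pi.single i
      (IsLocalization.Away.invSelf (S := Localization.Away (p : ℤ)) (p : ℤ) ^ k))) : ℝ) =
      r i ^ (((p : ℝ) ^ k)⁻¹ : ℝ) := by
    rw [coe_prodRpow_ofAdd_single hp hr, map_pow, awayToReal_invSelf, inv_pow, Int.cast_natCast]
  congr 1
  ext u
  constructor
  · rintro ⟨⟨i, k⟩, rfl⟩
    exact ⟨(coe_prodRpow hp r _).symm ▸ exp_pos _, i, k, h_gen i k⟩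
  · rintro ⟨-, i, k, hu⟩
    exact ⟨(i, k), Units.ext ((h_gen i k).trans hu.symm)⟩

/-- If `r₁, …, rₙ > 0` are multiplicatively independent reals and `p` is a prime,
then the subgroup of `ℝ_{>0}` generated by all `pᵏ`-th roots `rᵢ^(1/pᵏ)` is a free
`ℤ[1/p]`-module of rank `n`, i.e. isomorphic as an abelian group to `(ℤ[1/p])ⁿ`. -/
theorem stmt6 (n p : ℕ) (hp : p.Prime) (r : Fin n → ℝ) (hr : ∀ i, 0 < r i)
    (hindep : ∀ m : Fin n → ℤ, (∏ i, r i ^ m i) = 1 → m = 0) :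
    Nonempty
      (Additive (Subgroup.closure
          {u : ℝˣ | 0 < (u : ℝ) ∧
            ∃ (i : Fin n) (k : ℕ), (u : ℝ) = (r i) ^ (((p : ℝ) ^ k)⁻¹ : ℝ)}) ≃+
        (Fin n → Localization.Away (p : ℤ))) := by
  have hp0 : (p : ℤ) ≠ 0 := by exact_mod_cast hp.ne_zero
  exact ⟨MulEquiv.toAdditiveLeft ((MulEquiv.subgroupCongr (range_prodRpow hp0 hr)).symm.trans
    (MonoidHom.ofInjective (prodRpow_injective hp0 hr hindep)).symm)⟩
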